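/- Let C, C' be neighbouring columns of D of height t with C to the left of C'. Then every box b of D lying in rows R_1,…,R_t strictly between C and C' has exactly one left-going line of ℓ(D) labelled 1, and the left end-point of this line lies in rows R_1,…,R_t in a column from C (inclusive) up to but excluding C'. -/

import Mathlib

open scoped Classical

/-- height of column `j` of the diagram (columns numbered from 1). -/
def hgt (c : List ℕ) (j : ℕ) : ℕ := c.getD (j - 1) 0

/-- number of boxes in the columns strictly to the left of column `j`. -/
def off (c : List ℕ) (j : ℕ) : ℕ := (c.take (j - 1)).sum

/-- `(i, j)` (row `i`, column `j`) is a box of the diagram `D`. -/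
def IsBox (c : List ℕ) (i j : ℕ) : Prop :=
  1 ≤ j ∧ j ≤ c.length ∧ 1 ≤ i ∧ i ≤ hgt c j

/-- the entry of the box `(i, j)` in the tableau `T`. -/
def Tentry (c : List ℕ) (i j : ℕ) : ℕ := off c j + i

/-- the column of the box of `D` carrying entry `m` in `T`. -/
noncomputable def colOf (c : List ℕ) (m : ℕ) : ℕ := sInf {j | m ≤ (c.take j).sum}

/-- the row of the box of `D` carrying entry `m` in `T`. -/
noncomputable def rowOf (c : List ℕ) (m : ℕ) : ℕ := m - off c (colOf c m)

/-- the total order `≼` on entries: increasing down columns, then from right to left. -/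
def ple (c : List ℕ) (a b : ℕ) : Prop :=
  colOf c b < colOf c a ∨ (colOf c a = colOf c b ∧ a ≤ b)

/-- the strict version of `≼`. -/
def plt (c : List ℕ) (a b : ℕ) : Prop :=
  colOf c b < colOf c a ∨ (colOf c a = colOf c b ∧ a < b)

/-- column `j` has a left neighbour in `D`. -/
def HasLeftNb (c : List ℕ) (j : ℕ) : Prop :=
  ∃ i, 1 ≤ i ∧ i < j ∧ hgt c i = hgt c j ∧
    ∀ i', i < i' → i' < j → hgt c i' ≠ hgt c j

/-- the `j`-th column of the tableau `T`, rows to optional entries. -/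
def Tcol (c : List ℕ) (j : ℕ) : ℕ → Option ℕ := fun i =>
  if 1 ≤ i ∧ i ≤ hgt c j then some (Tentry c i j) else none

/-- one step of the propagation rule building `T(∞)`: the entry (if any) in row `t`
of column `j - 1` of `T(∞)` (given by `prev`) is propagated into the partially
built column `j` (given by `cur`). -/
noncomputable def propStep (c : List ℕ) (j : ℕ) (prev : ℕ → Option ℕ)
    (cur : ℕ → Option ℕ) (t : ℕ) : ℕ → Option ℕ :=
  match prev t with
  | none => cur
  | some l =>
    if hgt c j = t then
      if HasLeftNb c j ∧ cur (t + 1) = none then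
        Function.update cur (t + 1) (some l)
      else cur
    else
      if cur t = none then Function.update cur t (some l) else cur

/-- the `j`-th column of the composition tableau `T(∞)`. -/
noncomputable def TinfCol (c : List ℕ) : ℕ → ℕ → Option ℕ
  | 0 => fun _ => none
  | 1 => Tcol c 1
  | j + 2 =>
      (List.range (c.sum + 2)).foldl
        (propStep c (j + 2) (TinfCol c (j + 1))) (Tcol c (j + 2))

/-- labels of lines: `1` or `∗`. -/
inductive Lab : Type
  | one : Lab
  | star : Lab
deriving DecidableEq

/-- maximal height among the columns `1, …, j - 1`. -/
def maxHgt (c : List ℕ) (j : ℕ) : ℕ := (c.take (j - 1)).foldr max 0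

/-- the maximal column height of the diagram `D`. -/
def maxH (c : List ℕ) : ℕ := c.foldr max 0

/-- `LineB c a i j lab` : the line family `ℓ(D)` contains a line labelled `lab`
whose left end-point is the box of `D` carrying entry `a` in `T` and whose right
end-point is the box `(i, j)` (row `i` of column `C_j`). -/
def LineB (c : List ℕ) (a i j : ℕ) (lab : Lab) : Prop :=
  2 ≤ j ∧ j ≤ c.length ∧ 1 ≤ i ∧
    (match lab with
     | Lab.one =>
         (maxHgt c j < hgt c j ∧ i ≤ maxHgt c j + 1 ∧ TinfCol c (j - 1) i = some a)
       ∨ (hgt c j ≤ maxHgt c j ∧ i + 1 ≤ hgt c j ∧ TinfCol c (j - 1) i = some a)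
       ∨ (hgt c j ≤ maxHgt c j ∧ i = hgt c j ∧
           ¬(∃ j', 1 ≤ j' ∧ j' < j ∧ hgt c j' = hgt c j) ∧
           TinfCol c (j - 1) i = some a)
       ∨ (hgt c j ≤ maxHgt c j ∧ i = hgt c j ∧
           (∃ j', 1 ≤ j' ∧ j' < j ∧ hgt c j' = hgt c j) ∧
           TinfCol c (j - 1) (i + 1) = some a)
     | Lab.star =>
         hgt c j ≤ maxHgt c j ∧ i = hgt c j ∧
           (∃ j', 1 ≤ j' ∧ j' < j ∧ hgt c j' = hgt c j) ∧
           TinfCol c (j - 1) i = some a)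

/-- `LineE c a b lab` : `ℓ(D)` contains a line labelled `lab` joining the box of `D`
carrying entry `a` in `T` (on the left) to the box carrying entry `b` (on the right). -/
def LineE (c : List ℕ) (a b : ℕ) (lab : Lab) : Prop :=
  ∃ i j, LineB c a i j lab ∧ b = Tentry c i j

/-- the box `(i, j)` of `D` is right extremal relative to `ℓ(D)`. -/
def RExt (c : List ℕ) (i j : ℕ) : Prop :=
  IsBox c i j ∧ ∀ i' j', ¬ LineB c (Tentry c i j) i' j' Lab.one

/-- `c` is a composition of `n`. -/
def IsComposition (c : List ℕ) (n : ℕ) : Prop :=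
  c.sum = n ∧ ∀ x ∈ c, 0 < x

/-! Propagation moves an entry of `T(∞)` one column to the right, in its own row, or one row
lower when it meets the bottom of a column of exactly that height. Hence, starting from a column
`C_p`, every row `r ≤ height(C_p)` of every later column is filled: by a `T`-entry if the column
reaches row `r`, and otherwise by the entry of row `r` of the previous column, propagated into the
empty box. Inductively, each of these entries is the `T`-entry of a box in rows `≤ height(C_p)` of a
column from `C_p` on. The line labelled `1` into a box `(i, j)` starts at row `i` of column `j - 1`
of `T(∞)`, or at row `i + 1` in the `∗` case `i = height(C_j)`; strictly between neighbouring
columns of height `t` we have `height(C_j) ≠ t`, so for `i ≤ t` that row is again `≤ t`. -/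

section Propagation

variable (c : List ℕ) (j : ℕ) (prev : ℕ → Option ℕ)

theorem propStep_eq_or (cur : ℕ → Option ℕ) (t r : ℕ) :
    propStep c j prev cur t r = cur r ∨
      (cur r = none ∧ propStep c j prev cur t r = prev t ∧
        (r = t ∨ (r = t + 1 ∧ hgt c j = t))) := by
  unfold propStep
  cases hpt : prev t with
  | none => exact Or.inl rfl
  | some l =>
    simp only
    split_ifs with h1 h2 h3
    · rcases eq_or_ne r (t + 1) with rfl | hr
      · exact Or.inr ⟨h2.2, by simp, Or.inr ⟨rfl, h1⟩⟩
      · exact Or.inl (Function.update_of_ne hr _ _)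
    · exact Or.inl rfl
    · rcases eq_or_ne r t with rfl | hr
      · exact Or.inr ⟨h3, by simp, Or.inl rfl⟩
      · exact Or.inl (Function.update_of_ne hr _ _)
    · exact Or.inl rfl

theorem propStep_of_ne_none {cur : ℕ → Option ℕ} {r : ℕ} (h : cur r ≠ none) (t : ℕ) :
    propStep c j prev cur t r = cur r :=
  (propStep_eq_or c j prev cur t r).resolve_right fun h' => h h'.1

theorem foldl_propStep_of_ne_none (l : List ℕ) {cur : ℕ → Option ℕ} {r : ℕ}
    (h : cur r ≠ none) : l.foldl (propStep c j prev) cur r = cur r := by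
  induction l generalizing cur with
  | nil => rfl
  | cons t l ih =>
    have hstep := propStep_of_ne_none c j prev h t
    rw [List.foldl_cons, ih (hstep ▸ h), hstep]

theorem foldl_propStep_ne_none {l : List ℕ} {t : ℕ} (ht : t ∈ l) (hh : hgt c j ≠ t)
    (hp : prev t ≠ none) (cur : ℕ → Option ℕ) :
    l.foldl (propStep c j prev) cur t ≠ none := by
  induction l generalizing cur with
  | nil => cases ht
  | cons a l ih =>
    rw [List.foldl_cons]
    rcases List.mem_cons.mp ht with rfl | ht
    · have hfilled : propStep c j prev cur t t ≠ none := by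
        obtain ⟨l', hl'⟩ := Option.ne_none_iff_exists'.mp hp
        by_cases hcur : cur t = none
        · simp [propStep, hl', hh, hcur]
        · rwa [propStep_of_ne_none c j prev hcur]
      rwa [foldl_propStep_of_ne_none c j prev l hfilled]
    · exact ih ht _

theorem foldl_propStep_eq_some {l : List ℕ} {cur : ℕ → Option ℕ} {r x : ℕ}
    (h : l.foldl (propStep c j prev) cur r = some x) :
    cur r = some x ∨ prev r = some x ∨ (r = hgt c j + 1 ∧ prev (hgt c j) = some x) := by
  induction l generalizing cur with
  | nil => exact Or.inl h
  | cons t l ih =>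
    rcases ih h with h' | h' | h'
    · rcases propStep_eq_or c j prev cur t r with he | ⟨_, he, rfl | ⟨rfl, hht⟩⟩
      · exact Or.inl (he ▸ h')
      · exact Or.inr (Or.inl (he ▸ h'))
      · subst hht
        exact Or.inr (Or.inr ⟨rfl, he ▸ h'⟩)
    · exact Or.inr (Or.inl h')
    · exact Or.inr (Or.inr h')

end Propagation

section CompositionTableau

variable {c : List ℕ} {j r x : ℕ}

theorem TinfCol_eq_foldl (hj : 2 ≤ j) :
    TinfCol c j = (List.range (c.sum + 2)).foldl
      (propStep c j (TinfCol c (j - 1))) (Tcol c j) := by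
  obtain ⟨m, rfl⟩ : ∃ m, j = m + 2 := ⟨j - 2, by omega⟩
  rfl

theorem TinfCol_of_le_hgt (hj : 1 ≤ j) (hr1 : 1 ≤ r) (hr2 : r ≤ hgt c j) :
    TinfCol c j r = some (Tentry c r j) := by
  have hT : Tcol c j r = some (Tentry c r j) := by simp [Tcol, hr1, hr2]
  rcases Nat.lt_or_ge j 2 with hj1 | hj2
  · obtain rfl : j = 1 := by omega
    exact hT
  · rw [TinfCol_eq_foldl hj2, foldl_propStep_of_ne_none _ _ _ _ (by simp [hT]), hT]

theorem TinfCol_ne_none_of_hgt_ne (hj : 2 ≤ j) (hr : r ≤ c.sum) (hh : hgt c j ≠ r)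
    (hprev : TinfCol c (j - 1) r ≠ none) : TinfCol c j r ≠ none := by
  rw [TinfCol_eq_foldl hj]
  exact foldl_propStep_ne_none _ _ _ (List.mem_range.mpr (by omega)) hh hprev _

theorem TinfCol_eq_some (hj : 2 ≤ j) (h : TinfCol c j r = some x) :
    Tcol c j r = some x ∨ TinfCol c (j - 1) r = some x ∨
      (r = hgt c j + 1 ∧ TinfCol c (j - 1) (hgt c j) = some x) := by
  rw [TinfCol_eq_foldl hj] at h
  exact foldl_propStep_eq_some _ _ _ h

theorem hgt_le_sum (c : List ℕ) (j : ℕ) : hgt c j ≤ c.sum := by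
  rcases Nat.lt_or_ge (j - 1) c.length with hj | hj
  · rw [hgt, List.getD_eq_getElem c 0 hj]
    exact List.le_sum_of_mem (List.getElem_mem hj)
  · rw [hgt, List.getD_eq_default c 0 hj]
    exact Nat.zero_le _

theorem IsComposition.hgt_pos {n : ℕ} (hc : IsComposition c n) (hj1 : 1 ≤ j)
    (hj2 : j ≤ c.length) : 0 < hgt c j := by
  have hj : j - 1 < c.length := by omega
  rw [hgt, List.getD_eq_getElem c 0 hj]
  exact hc.2 _ (List.getElem_mem hj)

theorem hgt_le_maxHgt {p : ℕ} (hp : 1 ≤ p) (hpj : p < j) (hpc : p ≤ c.length) :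
    hgt c p ≤ maxHgt c j := by
  have hp' : p - 1 < (c.take (j - 1)).length := by rw [List.length_take]; omega
  have he : hgt c p = (c.take (j - 1))[p - 1] := by
    rw [hgt, List.getD_eq_getElem c 0 (by omega), List.getElem_take]
  rw [he, maxHgt]
  exact List.le_max_of_le (List.getElem_mem hp') le_rfl

theorem colOf_Tentry (hbox : IsBox c r j) : colOf c (Tentry c r j) = j := by
  obtain ⟨hj1, hj2, hr1, hr2⟩ := hbox
  have hsum : (c.take j).sum = off c j + hgt c j := by
    have h := List.sum_take_succ c (j - 1) (by omega)
    rwa [Nat.sub_add_cancel hj1, ← List.getD_eq_getElem c 0] at h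
  refine IsLeast.csInf_eq ⟨by simp only [Set.mem_ofPred_eq, Tentry, hsum]; omega, fun m hm => ?_⟩
  by_contra! hmj
  have hmono : (c.take m).sum ≤ off c j :=
    (List.take_prefix_take_left (by omega)).sublist.sum_le_sum fun _ _ => Nat.zero_le _
  simp only [Set.mem_ofPred_eq, Tentry] at hm
  omega

theorem rowOf_Tentry (hbox : IsBox c r j) : rowOf c (Tentry c r j) = r := by
  rw [rowOf, colOf_Tentry hbox, Tentry, Nat.add_sub_cancel_left]

theorem TinfCol_eq_Tentry_of_le_hgt {n p : ℕ} (hc : IsComposition c n) (hp : 1 ≤ p)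
    (hpj : p ≤ j) (hjc : j ≤ c.length) (hr1 : 1 ≤ r) (hr : r ≤ hgt c p) :
    ∃ r' j', p ≤ j' ∧ j' ≤ j ∧ IsBox c r' j' ∧ r' ≤ hgt c p ∧
      TinfCol c j r = some (Tentry c r' j') := by
  induction j, hpj using Nat.le_induction generalizing r with
  | base => exact ⟨r, p, le_rfl, le_rfl, ⟨hp, hjc, hr1, hr⟩, hr, TinfCol_of_le_hgt hp hr1 hr⟩
  | succ j hpj ih =>
    by_cases hlow : r ≤ hgt c (j + 1)
    · exact ⟨r, j + 1, by omega, le_rfl, ⟨by omega, hjc, hr1, hlow⟩, hr,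
        TinfCol_of_le_hgt (by omega) hr1 hlow⟩
    have hfilled : TinfCol c (j + 1) r ≠ none := by
      refine TinfCol_ne_none_of_hgt_ne (by omega) (hr.trans (hgt_le_sum c p)) (by omega) ?_
      obtain ⟨_, _, _, _, _, _, h⟩ := ih (by omega) hr1 hr
      simp [h]
    obtain ⟨x, hx⟩ := Option.ne_none_iff_exists'.mp hfilled
    have lift : ∀ s, 1 ≤ s → s ≤ hgt c p → TinfCol c j s = some x →
        ∃ r' j', p ≤ j' ∧ j' ≤ j + 1 ∧ IsBox c r' j' ∧ r' ≤ hgt c p ∧ x = Tentry c r' j' := by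
      intro s hs1 hs hsx
      obtain ⟨r', j', h1, h2, h3, h4, h⟩ := ih (by omega) hs1 hs
      exact ⟨r', j', h1, by omega, h3, h4, Option.some_inj.mp (hsx.symm.trans h)⟩
    obtain ⟨r', j', h1, h2, h3, h4, rfl⟩ : ∃ r' j', p ≤ j' ∧ j' ≤ j + 1 ∧ IsBox c r' j' ∧
        r' ≤ hgt c p ∧ x = Tentry c r' j' := by
      rcases TinfCol_eq_some (by omega) hx with hT | hprev | ⟨rfl, hprev⟩
      · simp [Tcol, hlow] at hT
      · exact lift r hr1 hr hprev
      · exact lift _ (hc.hgt_pos (by omega) hjc) (by omega) hprev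
    exact ⟨r', j', h1, h2, h3, h4, hx⟩

end CompositionTableau

/-- The row of column `C_{j-1}` of `T(∞)` holding the left end-point of the line labelled `1` into
the box `(i, j)`: `ρ_{i+1}` in the `∗` case of `ℓ(D)`, `ρ_i` otherwise. -/
noncomputable def lineRow (c : List ℕ) (i j : ℕ) : ℕ :=
  if i = hgt c j ∧ ∃ j', 1 ≤ j' ∧ j' < j ∧ hgt c j' = hgt c j then i + 1 else i

theorem LineB_one_iff {c : List ℕ} {a i j : ℕ} (hj : 2 ≤ j) (hbox : IsBox c i j)
    (hi : i ≤ maxHgt c j + 1) :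
    LineB c a i j Lab.one ↔ TinfCol c (j - 1) (lineRow c i j) = some a := by
  obtain ⟨_, hjc, hi1, hih⟩ := hbox
  have hE : (∃ j', 1 ≤ j' ∧ j' < j ∧ hgt c j' = hgt c j) → hgt c j ≤ maxHgt c j :=
    fun ⟨j', h1, h2, h3⟩ => h3 ▸ hgt_le_maxHgt h1 h2 (by omega)
  simp only [LineB, lineRow, hj, hjc, hi1, true_and]
  split_ifs with h
  · obtain ⟨rfl, hex⟩ := h
    have := hE hex
    constructor
    · rintro (⟨h1, -⟩ | ⟨-, h2, -⟩ | ⟨-, -, h3, -⟩ | ⟨-, -, -, h4⟩)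
      · omega
      · omega
      · exact absurd hex h3
      · exact h4
    · exact fun h4 => Or.inr (Or.inr (Or.inr ⟨this, rfl, hex, h4⟩))
  · constructor
    · rintro (⟨-, -, h1⟩ | ⟨-, -, h2⟩ | ⟨-, -, -, h3⟩ | ⟨-, h4, hex, -⟩)
      · exact h1
      · exact h2
      · exact h3
      · exact absurd ⟨h4, hex⟩ h
    · intro ha
      rcases Nat.lt_or_ge (maxHgt c j) (hgt c j) with hlt | hge
      · exact Or.inl ⟨hlt, hi, ha⟩
      rcases Nat.lt_or_ge i (hgt c j) with hlt | hge'
      · exact Or.inr (Or.inl ⟨hge, hlt, ha⟩)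
      have hieq : i = hgt c j := by omega
      exact Or.inr (Or.inr (Or.inl ⟨hge, hieq, fun hex => h ⟨hieq, hex⟩, ha⟩))

theorem statement7_general (n : ℕ) (c : List ℕ) (hc : IsComposition c n)
    (p q tt : ℕ) (hp : 1 ≤ p) (hq : q ≤ c.length) (hhp : hgt c p = tt)
    (hnbr : ∀ j, p < j → j < q → hgt c j ≠ tt) :
    ∀ i j, p < j → j < q → IsBox c i j → i ≤ tt →
      (∃! a, LineB c a i j Lab.one) ∧
      (∀ a, LineB c a i j Lab.one →
        rowOf c a ≤ tt ∧ p ≤ colOf c a ∧ colOf c a < q) := by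
  subst hhp
  intro i j hpj hjq hbox hi
  have hrow : 1 ≤ lineRow c i j ∧ lineRow c i j ≤ hgt c p := by
    have := hnbr j hpj hjq
    have := hbox.2.2.1
    unfold lineRow
    split_ifs with h <;> omega
  obtain ⟨r', j', hpj', hj'j, hbox', hr', hx⟩ :=
    TinfCol_eq_Tentry_of_le_hgt hc hp (j := j - 1) (by omega) (by omega) hrow.1 hrow.2
  have hmax : hgt c p ≤ maxHgt c j := hgt_le_maxHgt hp hpj (by omega)
  have hline : ∀ a, LineB c a i j Lab.one ↔ a = Tentry c r' j' := fun a => by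
    rw [LineB_one_iff (by omega) hbox (by omega), hx, Option.some_inj, eq_comm]
  refine ⟨⟨_, (hline _).2 rfl, fun a ha => (hline a).1 ha⟩, fun a ha => ?_⟩
  rw [(hline a).1 ha, rowOf_Tentry hbox', colOf_Tentry hbox']
  omega

/-- let `C = C_p`, `C' = C_q` be neighbouring columns of `D` of height
`tt` with `C` to the left of `C'`.  Every box of `D` lying in rows `R_1, …, R_tt`
strictly between `C` and `C'` has exactly one left-going line of `ℓ(D)` labelled
`1`, and the left end-point of this line lies in rows `R_1, …, R_tt` in a column
from `C` (inclusive) up to but excluding `C'`. -/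
theorem statement7 (n : ℕ) (hn : 0 < n) (c : List ℕ) (hc : IsComposition c n)
    (p q tt : ℕ) (hp : 1 ≤ p) (hq : q ≤ c.length) (hpq : p < q)
    (hhp : hgt c p = tt) (hhq : hgt c q = tt)
    (hnbr : ∀ j, p < j → j < q → hgt c j ≠ tt) :
    ∀ i j, p < j → j < q → IsBox c i j → i ≤ tt →
      (∃! a, LineB c a i j Lab.one) ∧
      (∀ a, LineB c a i j Lab.one →
        rowOf c a ≤ tt ∧ p ≤ colOf c a ∧ colOf c a < q) :=
  statement7_general n c hc p q tt hp hq hhp hnbr
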